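/- arXiv:2208.02575 — 3 statements merged into one kernel-verified Lean document; each statement's English description precedes it below -/
import Mathlib

section
/- Let A ∈ t and set Φ_h := {α ∈ Φ : α(A) = 0}, U := ⋂_{α ∈ Φ_h} Ker α ⊆ t, and B := U ∖ ⋃_{α ∈ Φ ∖ Φ_h} Ker α. Then the setwise stabilisers coincide: Stab_W(U) = Stab_W(B); moreover the intersection of the Weyl orbit W·A with B equals the orbit of A under Stab_W(B), i.e. (W·A) ∩ B = {w(A) : w ∈ Stab_W(B)}. -/
/-- Let `t` be a finite-dimensional complex vector space, `Φ ⊂ t* ∖ {0}` a finite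
reduced crystallographic root system with coroots `coroot α ∈ t` and reflections
`s α : x ↦ x - α(x) • coroot α` generating the Weyl group `W ≤ GL(t)`, which permutes
`Φ` via the contragredient action.  Let `A ∈ t`, `Φ_h = {α ∈ Φ : α(A) = 0}`,
`U = ⋂_{α ∈ Φ_h} Ker α` and `B = U ∖ ⋃_{α ∈ Φ ∖ Φ_h} Ker α`.  Then
`Stab_W(U) = Stab_W(B)`, and `(W·A) ∩ B` equals the orbit of `A` under `Stab_W(B)`. -/
theorem stmt_0 {t : Type*} [AddCommGroup t] [Module ℂ t] [FiniteDimensional ℂ t]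
    (Φ : Finset (Module.Dual ℂ t)) (hΦ0 : (0 : Module.Dual ℂ t) ∉ Φ)
    (coroot : Module.Dual ℂ t → t) (s : Module.Dual ℂ t → (t ≃ₗ[ℂ] t))
    (hpair : ∀ α ∈ Φ, α (coroot α) = 2)
    (hs : ∀ α ∈ Φ, ∀ x : t, s α x = x - α x • coroot α)
    (hreduced : ∀ α ∈ Φ, ∀ c : ℂ, c • α ∈ Φ → c = 1 ∨ c = -1)
    (hcrys : ∀ α ∈ Φ, ∀ β ∈ Φ, ∃ n : ℤ, β (coroot α) = (n : ℂ))
    (hperm : ∀ α ∈ Φ, ∀ β ∈ Φ, β ∘ₗ ((s α).symm : t →ₗ[ℂ] t) ∈ Φ)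
    (W : Subgroup (t ≃ₗ[ℂ] t))
    (hW : W = Subgroup.closure {w : t ≃ₗ[ℂ] t | ∃ α ∈ Φ, w = s α})
    (A : t)
    (Φh : Set (Module.Dual ℂ t)) (hΦh : Φh = {α : Module.Dual ℂ t | α ∈ Φ ∧ α A = 0})
    (U : Set t) (hU : U = ⋂ α ∈ Φh, {x : t | α x = 0})
    (B : Set t)
    (hB : B = U \ ⋃ α ∈ (↑Φ : Set (Module.Dual ℂ t)) \ Φh, {x : t | α x = 0}) :
    {w : t ≃ₗ[ℂ] t | w ∈ W ∧ ⇑w '' U = U} = {w : t ≃ₗ[ℂ] t | w ∈ W ∧ ⇑w '' B = B} ∧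
      {x : t | ∃ w ∈ W, w A = x} ∩ B
        = {x : t | ∃ w : t ≃ₗ[ℂ] t, (w ∈ W ∧ ⇑w '' B = B) ∧ w A = x} := by
  classical
  -- reflections are involutions
  have hss : ∀ α ∈ Φ, ∀ x, s α (s α x) = x := by
    intro α hα x
    rw [hs α hα, hs α hα]
    simp only [map_sub, map_smul, smul_eq_mul, hpair α hα]
    module
  have hsymm : ∀ α ∈ Φ, (s α).symm = s α := fun α hα =>
    LinearEquiv.ext fun x => (s α).injective
      (by rw [LinearEquiv.apply_symm_apply, hss α hα])
  -- W permutes Φ (contragredient action, both directions)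
  have hWperm : ∀ w ∈ W, ∀ β ∈ Φ,
      β ∘ₗ (w.symm : t →ₗ[ℂ] t) ∈ Φ ∧ β ∘ₗ (w : t →ₗ[ℂ] t) ∈ Φ := by
    intro w hw
    rw [hW] at hw
    induction hw using Subgroup.closure_induction with
    | mem x hx =>
      obtain ⟨α, hα, rfl⟩ := hx
      intro β hβ
      refine ⟨hperm α hα β hβ, ?_⟩
      have h := hperm α hα β hβ
      rwa [hsymm α hα] at h
    | one =>
      intro β hβ
      have h1 : β ∘ₗ (((1 : t ≃ₗ[ℂ] t)).symm : t →ₗ[ℂ] t) = β := LinearMap.ext fun x => rfl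
      have h2 : β ∘ₗ (((1 : t ≃ₗ[ℂ] t)) : t →ₗ[ℂ] t) = β := LinearMap.ext fun x => rfl
      rw [h1, h2]; exact ⟨hβ, hβ⟩
    | mul x y hx hy px py =>
      intro β hβ
      constructor
      · have h1 : β ∘ₗ ((x * y).symm : t →ₗ[ℂ] t)
            = (β ∘ₗ (y.symm : t →ₗ[ℂ] t)) ∘ₗ (x.symm : t →ₗ[ℂ] t) :=
          LinearMap.ext fun u => rfl
        rw [h1]
        exact (px _ ((py β hβ).1)).1
      · have h2 : β ∘ₗ ((x * y : t ≃ₗ[ℂ] t) : t →ₗ[ℂ] t)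
            = (β ∘ₗ (x : t →ₗ[ℂ] t)) ∘ₗ (y : t →ₗ[ℂ] t) :=
          LinearMap.ext fun u => rfl
        rw [h2]
        exact (py _ ((px β hβ).2)).2
    | inv x hx px =>
      intro β hβ
      refine ⟨?_, ?_⟩
      · have h : β ∘ₗ ((x⁻¹ : t ≃ₗ[ℂ] t).symm : t →ₗ[ℂ] t) = β ∘ₗ (x : t →ₗ[ℂ] t) :=
          LinearMap.ext fun u => rfl
        rw [h]; exact (px β hβ).2
      · have h : β ∘ₗ ((x⁻¹ : t ≃ₗ[ℂ] t) : t →ₗ[ℂ] t) = β ∘ₗ (x.symm : t →ₗ[ℂ] t) :=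
          LinearMap.ext fun u => rfl
        rw [h]; exact (px β hβ).1
  have hΦhΦ : ∀ α ∈ Φh, α ∈ Φ := by
    intro α hα; rw [hΦh] at hα; exact hα.1
  have hUmem : ∀ x : t, x ∈ U ↔ ∀ α ∈ Φh, α x = 0 := by
    intro x; rw [hU]; simp
  have hBmem : ∀ x : t, x ∈ B ↔ x ∈ U ∧ ∀ α ∈ Φ, α ∉ Φh → α x ≠ 0 := by
    intro x
    rw [hB]
    constructor
    · rintro ⟨h1, h2⟩
      refine ⟨h1, fun α hα hαh h0 => h2 ?_⟩
      exact Set.mem_biUnion ⟨Finset.mem_coe.2 hα, hαh⟩ h0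
    · rintro ⟨h1, h2⟩
      refine ⟨h1, fun hmem => ?_⟩
      obtain ⟨α, hα, h0⟩ := Set.mem_iUnion₂.1 hmem
      exact h2 α (Finset.mem_coe.1 hα.1) hα.2 h0
  have hAU : A ∈ U := by
    rw [hUmem]; intro α hα; rw [hΦh] at hα; exact hα.2
  have hAB : A ∈ B := by
    rw [hBmem]
    refine ⟨hAU, fun α hα hαh h0 => hαh ?_⟩
    rw [hΦh]; exact ⟨hα, h0⟩
  -- the finset version of Φh
  set F : Finset (Module.Dual ℂ t) := Φ.filter (fun α => α A = 0) with hFdef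
  have hF : ∀ α, α ∈ F ↔ α ∈ Φh := by
    intro α; rw [hΦh]; simp [hFdef, Finset.mem_filter]
  -- mapping Φh into Φh forwards implies backwards
  have hback : ∀ w : t ≃ₗ[ℂ] t,
      (∀ α ∈ Φh, α ∘ₗ (w.symm : t →ₗ[ℂ] t) ∈ Φh) →
      ∀ β ∈ Φh, β ∘ₗ (w : t →ₗ[ℂ] t) ∈ Φh := by
    intro w hto β hβ
    have hsurj := Finset.surj_on_of_inj_on_of_card_le (s := F) (t := F)
      (fun a _ => a ∘ₗ (w.symm : t →ₗ[ℂ] t))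
      (fun a ha => (hF _).2 (hto a ((hF a).1 ha)))
      (fun a₁ a₂ _ _ h => LinearMap.ext fun x => by
        have := LinearMap.congr_fun h (w x)
        simpa using this)
      le_rfl β ((hF β).2 hβ)
    obtain ⟨a, ha, hae⟩ := hsurj
    have he : β ∘ₗ (w : t →ₗ[ℂ] t) = a := by
      rw [hae]; exact LinearMap.ext fun x => by simp
    rw [he]; exact (hF a).1 ha
  -- stabilization from mapping Φh to itself
  have hstab : ∀ w ∈ W, (∀ α ∈ Φh, α ∘ₗ (w.symm : t →ₗ[ℂ] t) ∈ Φh) →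
      (⇑w '' U = U ∧ ⇑w '' B = B) := by
    intro w hw hto
    have hfrom := hback w hto
    have hUU : ∀ x ∈ U, w x ∈ U := by
      intro x hx
      rw [hUmem]
      intro α hα
      have h := (hUmem x).1 hx _ (hfrom α hα)
      simpa using h
    have hUU' : ∀ x ∈ U, w.symm x ∈ U := by
      intro x hx
      rw [hUmem]
      intro α hα
      have h := (hUmem x).1 hx _ (hto α hα)
      simpa using h
    have himgU : ⇑w '' U = U := by
      apply Set.Subset.antisymm
      · rintro y ⟨x, hx, rfl⟩; exact hUU x hx
      · intro y hy; exact ⟨w.symm y, hUU' y hy, by simp⟩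
    have hBB : ∀ x ∈ B, w x ∈ B := by
      intro x hx
      rw [hBmem] at hx ⊢
      refine ⟨hUU x hx.1, fun α hαΦ hαh h0 => ?_⟩
      have hαw : α ∘ₗ (w : t →ₗ[ℂ] t) ∈ Φ := (hWperm w hw α hαΦ).2
      have hαwh : α ∘ₗ (w : t →ₗ[ℂ] t) ∉ Φh := by
        intro hmem
        apply hαh
        have h := hto _ hmem
        have he : (α ∘ₗ (w : t →ₗ[ℂ] t)) ∘ₗ (w.symm : t →ₗ[ℂ] t) = α :=
          LinearMap.ext fun x => by simp
        rwa [he] at h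
      exact hx.2 _ hαw hαwh (by simpa using h0)
    have hBB' : ∀ x ∈ B, w.symm x ∈ B := by
      intro x hx
      rw [hBmem] at hx ⊢
      refine ⟨hUU' x hx.1, fun α hαΦ hαh h0 => ?_⟩
      have hαw : α ∘ₗ (w.symm : t →ₗ[ℂ] t) ∈ Φ := (hWperm w hw α hαΦ).1
      have hαwh : α ∘ₗ (w.symm : t →ₗ[ℂ] t) ∉ Φh := by
        intro hmem
        apply hαh
        have h := hfrom _ hmem
        have he : (α ∘ₗ (w.symm : t →ₗ[ℂ] t)) ∘ₗ (w : t →ₗ[ℂ] t) = α :=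
          LinearMap.ext fun x => by simp
        rwa [he] at h
      exact hx.2 _ hαw hαwh (by simpa using h0)
    have himgB : ⇑w '' B = B := by
      apply Set.Subset.antisymm
      · rintro y ⟨x, hx, rfl⟩; exact hBB x hx
      · intro y hy; exact ⟨w.symm y, hBB' y hy, by simp⟩
    exact ⟨himgU, himgB⟩
  have hBsubU : B ⊆ U := fun x hx => ((hBmem x).1 hx).1
  -- stabilizing U gives the mapsTo condition
  have hUto : ∀ w ∈ W, ⇑w '' U = U → ∀ α ∈ Φh, α ∘ₗ (w.symm : t →ₗ[ℂ] t) ∈ Φh := by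
    intro w hw himg α hα
    have hΦ' : α ∘ₗ (w.symm : t →ₗ[ℂ] t) ∈ Φ := (hWperm w hw α (hΦhΦ α hα)).1
    rw [hΦh]
    refine ⟨hΦ', ?_⟩
    have hA' : A ∈ ⇑w '' U := himg.symm ▸ hAU
    obtain ⟨x, hxU, hxA⟩ := hA'
    have : w.symm A = x := by rw [← hxA]; simp
    simp only [LinearMap.comp_apply, LinearEquiv.coe_coe]
    rw [this]
    exact (hUmem x).1 hxU α hα
  have hBto : ∀ w ∈ W, ⇑w '' B = B → ∀ α ∈ Φh, α ∘ₗ (w.symm : t →ₗ[ℂ] t) ∈ Φh := by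
    intro w hw himg α hα
    have hΦ' : α ∘ₗ (w.symm : t →ₗ[ℂ] t) ∈ Φ := (hWperm w hw α (hΦhΦ α hα)).1
    rw [hΦh]
    refine ⟨hΦ', ?_⟩
    have hA' : A ∈ ⇑w '' B := himg.symm ▸ hAB
    obtain ⟨x, hxB, hxA⟩ := hA'
    have : w.symm A = x := by rw [← hxA]; simp
    simp only [LinearMap.comp_apply, LinearEquiv.coe_coe]
    rw [this]
    exact (hUmem x).1 (hBsubU hxB) α hα
  have hOto : ∀ w ∈ W, w A ∈ B → ∀ α ∈ Φh, α ∘ₗ (w.symm : t →ₗ[ℂ] t) ∈ Φh := by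
    intro w hw hwA α hα
    have hΦ' : α ∘ₗ (w.symm : t →ₗ[ℂ] t) ∈ Φ := (hWperm w hw α (hΦhΦ α hα)).1
    by_contra hnot
    have h0 : (α ∘ₗ (w.symm : t →ₗ[ℂ] t)) (w A) = 0 := by
      simp only [LinearMap.comp_apply, LinearEquiv.coe_coe, LinearEquiv.symm_apply_apply]
      rw [hΦh] at hα; exact hα.2
    exact ((hBmem _).1 hwA).2 _ hΦ' hnot h0
  constructor
  · ext w
    simp only [Set.mem_setOf_eq]
    constructor
    · rintro ⟨hw, hU'⟩
      exact ⟨hw, (hstab w hw (hUto w hw hU')).2⟩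
    · rintro ⟨hw, hB'⟩
      exact ⟨hw, (hstab w hw (hBto w hw hB')).1⟩
  · ext x
    simp only [Set.mem_inter_iff, Set.mem_setOf_eq]
    constructor
    · rintro ⟨⟨w, hw, rfl⟩, hxB⟩
      exact ⟨w, ⟨hw, (hstab w hw (hOto w hw hxB)).2⟩, rfl⟩
    · rintro ⟨w, ⟨hw, hB'⟩, rfl⟩
      exact ⟨⟨w, hw, rfl⟩, hB' ▸ Set.mem_image_of_mem _ hAB⟩
end

section
/- Let p ≥ 1 and A₁, …, A_p ∈ t. For i ∈ {1, …, p+1} set Φ_{h_i} := {α ∈ Φ : α(A_j) = 0 for all j with i ≤ j ≤ p} (so Φ_{h_{p+1}} = Φ), U_i := ⋂_{α ∈ Φ_{h_i}} Ker α, and B_i := U_i ∖ ⋃_{α ∈ Φ_{h_{i+1}} ∖ Φ_{h_i}} Ker α for i ≤ p. Define subgroups W_{p+1} := W, and W_i := Stab_{W_{i+1}}(U_i) for i = p, p−1, …, 1. Then for each i ∈ {1, …, p} one has W_i = Stab_{W_{i+1}}(B_i), and the set {w ∈ W : w(A_i) ∈ B_i for all i} equals W₁; consequently, for the diagonal action of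 W on t^p, the intersection of the orbit W·(A₁, …, A_p) with B₁ × ⋯ × B_p equals the W₁-orbit of (A₁, …, A_p). -/
/-- Let `t`, `Φ`, `coroot`, `s`, `W` be as in the setting of a finite reduced
crystallographic root system with Weyl group `W` generated by the reflections `s α`.
Let `p ≥ 1` and `A 1, …, A p ∈ t`; for `1 ≤ i ≤ p + 1` set
`Φh i = {α ∈ Φ : α (A j) = 0 for all i ≤ j ≤ p}` (so `Φh (p+1) = Φ`),
`U i = ⋂_{α ∈ Φh i} Ker α`, and `B i = U i ∖ ⋃_{α ∈ Φh (i+1) ∖ Φh i} Ker α` for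
`i ≤ p`.  Define `Ws (p+1) = W` and `Ws i = Stab_{Ws (i+1)} (U i)` for
`i = p, …, 1`.  Then for each `1 ≤ i ≤ p` one has `Ws i = Stab_{Ws (i+1)} (B i)`;
the set of `w ∈ W` with `w (A i) ∈ B i` for all `i` equals `Ws 1`; and for the
diagonal action of `W` on `t^p`, the intersection of the orbit `W·(A 1, …, A p)` with
`B 1 × ⋯ × B p` equals the `Ws 1`-orbit of `(A 1, …, A p)`. -/
theorem stmt_5 {t : Type*} [AddCommGroup t] [Module ℂ t] [FiniteDimensional ℂ t]
    (Φ : Finset (Module.Dual ℂ t)) (hΦ0 : (0 : Module.Dual ℂ t) ∉ Φ)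
    (coroot : Module.Dual ℂ t → t) (s : Module.Dual ℂ t → (t ≃ₗ[ℂ] t))
    (hpair : ∀ α ∈ Φ, α (coroot α) = 2)
    (hs : ∀ α ∈ Φ, ∀ x : t, s α x = x - α x • coroot α)
    (hreduced : ∀ α ∈ Φ, ∀ c : ℂ, c • α ∈ Φ → c = 1 ∨ c = -1)
    (hcrys : ∀ α ∈ Φ, ∀ β ∈ Φ, ∃ n : ℤ, β (coroot α) = (n : ℂ))
    (hperm : ∀ α ∈ Φ, ∀ β ∈ Φ, β ∘ₗ ((s α).symm : t →ₗ[ℂ] t) ∈ Φ)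
    (W : Subgroup (t ≃ₗ[ℂ] t))
    (hW : W = Subgroup.closure {w : t ≃ₗ[ℂ] t | ∃ α ∈ Φ, w = s α})
    (p : ℕ) (hp : 1 ≤ p) (A : ℕ → t)
    (Φh : ℕ → Set (Module.Dual ℂ t))
    (hΦh : ∀ i, Φh i
        = {α : Module.Dual ℂ t | α ∈ Φ ∧ ∀ j, i ≤ j → j ≤ p → α (A j) = 0})
    (U : ℕ → Set t) (hU : ∀ i, U i = ⋂ α ∈ Φh i, {x : t | α x = 0})
    (B : ℕ → Set t)
    (hB : ∀ i, i ≤ p → B i = U i \ ⋃ α ∈ Φh (i + 1) \ Φh i, {x : t | α x = 0})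
    (Ws : ℕ → Set (t ≃ₗ[ℂ] t))
    (hWtop : Ws (p + 1) = (W : Set (t ≃ₗ[ℂ] t)))
    (hWrec : ∀ i, 1 ≤ i → i ≤ p → Ws i = {w ∈ Ws (i + 1) | ⇑w '' U i = U i}) :
    (∀ i, 1 ≤ i → i ≤ p → Ws i = {w ∈ Ws (i + 1) | ⇑w '' B i = B i}) ∧
      {w : t ≃ₗ[ℂ] t | w ∈ W ∧ ∀ i, 1 ≤ i → i ≤ p → w (A i) ∈ B i} = Ws 1 ∧
      {x : Fin p → t | ∃ w ∈ W, x = fun i : Fin p => w (A (i.1 + 1))} ∩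
          {x : Fin p → t | ∀ i : Fin p, x i ∈ B (i.1 + 1)}
        = {x : Fin p → t | ∃ w ∈ Ws 1, x = fun i : Fin p => w (A (i.1 + 1))} := by
  classical
  -- s α is an involution
  have hsq : ∀ α ∈ Φ, ∀ x : t, s α (s α x) = x := by
    intro α hα x
    rw [hs α hα, hs α hα, map_sub, map_smul, hpair α hα, smul_eq_mul]
    module
  have hssymm : ∀ α ∈ Φ, (s α).symm = s α := by
    intro α hα
    ext x
    rw [LinearEquiv.symm_apply_eq]
    exact (hsq α hα x).symm
  -- W permutes Φ (by composition on the right)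
  have hWΦ : ∀ w ∈ W, (∀ β ∈ Φ, β ∘ₗ (w : t →ₗ[ℂ] t) ∈ Φ) ∧
      (∀ β ∈ Φ, β ∘ₗ ((w⁻¹ : t ≃ₗ[ℂ] t) : t →ₗ[ℂ] t) ∈ Φ) := by
    intro w hw
    rw [hW] at hw
    induction hw using Subgroup.closure_induction with
    | mem x hx =>
      obtain ⟨α, hα, rfl⟩ := hx
      have h1 : ∀ β ∈ Φ, β ∘ₗ ((s α : t ≃ₗ[ℂ] t) : t →ₗ[ℂ] t) ∈ Φ := by
        intro β hβ
        have := hperm α hα β hβ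
        rwa [hssymm α hα] at this
      refine ⟨h1, ?_⟩
      have : (s α)⁻¹ = s α := by
        show (s α).symm = s α
        exact hssymm α hα
      rw [this]
      exact h1
    | one =>
      constructor <;> · intro β hβ; simpa using hβ
    | mul x y hx hy px py =>
      constructor
      · intro β hβ
        have h1 : β ∘ₗ ((x * y : t ≃ₗ[ℂ] t) : t →ₗ[ℂ] t)
            = (β ∘ₗ (x : t →ₗ[ℂ] t)) ∘ₗ (y : t →ₗ[ℂ] t) := rfl
        rw [h1]
        exact py.1 _ (px.1 β hβ)
      · intro β hβ
        have h1 : β ∘ₗ (((x * y)⁻¹ : t ≃ₗ[ℂ] t) : t →ₗ[ℂ] t)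
            = (β ∘ₗ ((y⁻¹ : t ≃ₗ[ℂ] t) : t →ₗ[ℂ] t)) ∘ₗ ((x⁻¹ : t ≃ₗ[ℂ] t) : t →ₗ[ℂ] t) := by
          rw [mul_inv_rev]; rfl
        rw [h1]
        exact px.2 _ (py.2 β hβ)
    | inv x hx px =>
      refine ⟨px.2, ?_⟩
      intro β hβ
      rw [inv_inv]
      exact px.1 β hβ
  have hΦiff : ∀ w ∈ W, ∀ α, α ∈ Φ ↔ α ∘ₗ (w : t →ₗ[ℂ] t) ∈ Φ := by
    intro w hw α
    constructor
    · exact (hWΦ w hw).1 α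
    · intro h
      have h2 := (hWΦ w hw).2 _ h
      have h3 : (α ∘ₗ (w : t →ₗ[ℂ] t)) ∘ₗ ((w⁻¹ : t ≃ₗ[ℂ] t) : t →ₗ[ℂ] t) = α := by
        ext v
        show α (w (w.symm v)) = α v
        rw [LinearEquiv.apply_symm_apply]
      rwa [h3] at h2
  -- membership lemmas
  have hUmem : ∀ i (x : t), x ∈ U i ↔ ∀ α ∈ Φh i, α x = 0 := by
    intro i x
    rw [hU i]
    simp
  have hΦmem : ∀ i α, α ∈ Φh i ↔ α ∈ Φ ∧ ∀ j, i ≤ j → j ≤ p → α (A j) = 0 := by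
    intro i α
    rw [hΦh i]
    rfl
  have hAinU : ∀ i j, i ≤ j → j ≤ p → A j ∈ U i := by
    intro i j hij hjp
    rw [hUmem]
    intro α hα
    exact ((hΦmem i α).1 hα).2 j hij hjp
  have hΦΦ : ∀ i, Φh i ⊆ ↑Φ := fun i α hα => ((hΦmem i α).1 hα).1
  have hΦfin : ∀ i, (Φh i).Finite := fun i => Φ.finite_toSet.subset (hΦΦ i)
  have hΦmono : ∀ i j, i ≤ j → Φh i ⊆ Φh j := by
    intro i j hij α hα
    rw [hΦmem] at hα ⊢
    exact ⟨hα.1, fun k hk hkp => hα.2 k (le_trans hij hk) hkp⟩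
  have hchar : ∀ i α, α ∈ Φh i ↔ α ∈ Φ ∧ ∀ x ∈ U i, α x = 0 := by
    intro i α
    constructor
    · intro h
      exact ⟨((hΦmem i α).1 h).1, fun x hx => (hUmem i x).1 hx α h⟩
    · rintro ⟨h1, h2⟩
      exact (hΦmem i α).2 ⟨h1, fun j hij hjp => h2 _ (hAinU i j hij hjp)⟩
  have htop : Φh (p + 1) = ↑Φ := by
    ext α
    rw [hΦmem]
    constructor
    · exact fun h => h.1
    · intro h
      exact ⟨h, fun j h1 h2 => absurd (le_trans h1 h2) (by omega)⟩
  have hUop : ∀ k (c : ℂ) (x y : t), x ∈ U k → y ∈ U k → x - c • y ∈ U k := by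
    intro k c x y hx hy
    rw [hUmem] at hx hy ⊢
    intro α hα
    rw [map_sub, map_smul, hx α hα, hy α hα, smul_zero, sub_zero]
  have hUadd : ∀ k (c : ℂ) (x y : t), x ∈ U k → y ∈ U k → x + c • y ∈ U k := by
    intro k c x y hx hy
    rw [hUmem] at hx hy ⊢
    intro α hα
    rw [map_add, map_smul, hx α hα, hy α hα, smul_zero, add_zero]
  -- stability of U k iff permutation of Φh k
  have hΦtoU : ∀ (w : t ≃ₗ[ℂ] t) k,
      (∀ α, α ∈ Φh k ↔ α ∘ₗ (w : t →ₗ[ℂ] t) ∈ Φh k) → ⇑w '' U k = U k := by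
    intro w k hiff
    ext x
    constructor
    · rintro ⟨y, hy, rfl⟩
      rw [hUmem]
      intro α hα
      have h1 : α ∘ₗ (w : t →ₗ[ℂ] t) ∈ Φh k := (hiff α).1 hα
      have := (hUmem k y).1 hy _ h1
      simpa using this
    · intro hx
      refine ⟨w.symm x, ?_, by simp⟩
      rw [hUmem]
      intro α hα
      have hβ : (α ∘ₗ ((w.symm : t ≃ₗ[ℂ] t) : t →ₗ[ℂ] t)) ∘ₗ (w : t →ₗ[ℂ] t) = α := by
        ext v; simp
      have h1 : α ∘ₗ ((w.symm : t ≃ₗ[ℂ] t) : t →ₗ[ℂ] t) ∈ Φh k :=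
        (hiff _).2 (by rw [hβ]; exact hα)
      have := (hUmem k x).1 hx _ h1
      simpa using this
  have hUtoΦ : ∀ w ∈ W, ∀ k, ⇑w '' U k = U k →
      (∀ α, α ∈ Φh k ↔ α ∘ₗ (w : t →ₗ[ℂ] t) ∈ Φh k) := by
    intro w hw k hUk α
    rw [hchar, hchar]
    constructor
    · rintro ⟨h1, h2⟩
      refine ⟨(hΦiff w hw α).1 h1, ?_⟩
      intro x hx
      have hwx : w x ∈ U k := by rw [← hUk]; exact ⟨x, hx, rfl⟩
      simpa using h2 _ hwx
    · rintro ⟨h1, h2⟩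
      refine ⟨(hΦiff w hw α).2 h1, ?_⟩
      intro x hx
      obtain ⟨y, hy, rfl⟩ : x ∈ ⇑w '' U k := by rw [hUk]; exact hx
      simpa using h2 y hy
  -- the key counting argument
  have hstabΦ : ∀ w ∈ W, ∀ i, (∀ j, i ≤ j → j ≤ p → w (A j) ∈ U j) →
      (∀ α, α ∈ Φh i ↔ α ∘ₗ (w : t →ₗ[ℂ] t) ∈ Φh i) := by
    intro w hw i hAj
    set f := fun γ : Module.Dual ℂ t => γ ∘ₗ (w : t →ₗ[ℂ] t) with hf
    set S' : Set (Module.Dual ℂ t) :=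
      {α | α ∈ Φ ∧ ∀ j, i ≤ j → j ≤ p → α (w (A j)) = 0} with hS'
    have hS'fin : S'.Finite := Φ.finite_toSet.subset (fun α hα => hα.1)
    have hSS' : Φh i ⊆ S' := by
      intro α hα
      refine ⟨((hΦmem i α).1 hα).1, fun j hij hjp => ?_⟩
      exact (hUmem j _).1 (hAj j hij hjp) α (hΦmono i j hij hα)
    have hfS' : ∀ α ∈ S', f α ∈ Φh i := by
      intro α hα
      rw [hΦmem]
      refine ⟨(hWΦ w hw).1 α hα.1, fun j hij hjp => ?_⟩
      simpa [hf] using hα.2 j hij hjp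
    have hinj : Function.Injective f := by
      intro a b hab
      ext v
      simpa [hf] using LinearMap.congr_fun hab (w.symm v)
    have h1 : f '' S' ⊆ Φh i := by
      rintro _ ⟨α, hα, rfl⟩
      exact hfS' α hα
    have hc1 : (f '' S').ncard = S'.ncard := Set.ncard_image_of_injective _ hinj
    have heq1 : f '' S' = Φh i := by
      refine Set.eq_of_subset_of_ncard_le h1 ?_ (hΦfin i)
      calc (Φh i).ncard ≤ S'.ncard := Set.ncard_le_ncard hSS' hS'fin
        _ = (f '' S').ncard := hc1.symm
    have heq2 : Φh i = S' := by
      refine Set.eq_of_subset_of_ncard_le hSS' ?_ hS'fin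
      rw [← hc1, heq1]
    have hff : f '' Φh i = Φh i := by conv_lhs => rw [heq2]
                                      exact heq1
    intro α
    constructor
    · intro hα
      have : f α ∈ f '' Φh i := ⟨α, hα, rfl⟩
      rwa [hff] at this
    · intro hα
      rw [show (α ∘ₗ (w : t →ₗ[ℂ] t)) = f α from rfl, ← hff] at hα
      obtain ⟨β, hβ, hfb⟩ := hα
      rwa [← hinj hfb]
  -- roots in Φh (i+1) \ Φh i do not vanish on A i
  have hABne : ∀ i, ∀ α ∈ Φh (i + 1) \ Φh i, α (A i) ≠ 0 := by
    rintro i α ⟨hα1, hα2⟩ h0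
    apply hα2
    rw [hΦmem] at hα1 ⊢
    refine ⟨hα1.1, fun j hij hjp => ?_⟩
    rcases eq_or_lt_of_le hij with he | hlt
    · rwa [← he]
    · exact hα1.2 j hlt hjp
  have hAB : ∀ i, i ≤ p → A i ∈ B i := by
    intro i hip
    rw [hB i hip]
    refine ⟨hAinU i i le_rfl hip, ?_⟩
    intro hmem
    simp only [Set.mem_iUnion, Set.mem_setOf_eq] at hmem
    obtain ⟨α, hα, h0⟩ := hmem
    exact hABne i α hα h0
  -- half of the stabiliser statement for B i
  have hBtoU : ∀ i, i ≤ p → ∀ v : t ≃ₗ[ℂ] t, ⇑v '' B i = B i →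
      ∀ x ∈ U i, v x ∈ U i := by
    intro i hip v hv x hx
    have hDfin : (Φh (i + 1) \ Φh i).Finite := (hΦfin (i + 1)).subset Set.diff_subset
    have hEfin : ((fun α : Module.Dual ℂ t => -(α x) / α (A i)) '' (Φh (i + 1) \ Φh i)).Finite :=
      hDfin.image _
    obtain ⟨c, hc⟩ := hEfin.exists_notMem
    have hxc : x + c • A i ∈ B i := by
      rw [hB i hip]
      refine ⟨hUadd i c x (A i) hx (hAinU i i le_rfl hip), ?_⟩
      intro hmem
      simp only [Set.mem_iUnion, Set.mem_setOf_eq] at hmem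
      obtain ⟨α, hα, h0⟩ := hmem
      apply hc
      refine ⟨α, hα, ?_⟩
      have hne := hABne i α hα
      rw [map_add, map_smul, smul_eq_mul] at h0
      field_simp
      linear_combination -h0
    have hBU : B i ⊆ U i := by rw [hB i hip]; exact Set.diff_subset
    have h1' : v (x + c • A i) ∈ U i := hBU (by rw [← hv]; exact ⟨_, hxc, rfl⟩)
    have h2' : v (A i) ∈ U i := hBU (by rw [← hv]; exact ⟨_, hAB i hip, rfl⟩)
    have hvx : v x = v (x + c • A i) - c • v (A i) := by
      rw [map_add, map_smul]
      abel
    rw [hvx]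
    exact hUop i c _ _ h1' h2'
  -- chain of inclusions
  have hchain : ∀ j, j ≤ p + 1 → ∀ i, 1 ≤ i → i ≤ j → Ws i ⊆ Ws j := by
    intro j
    induction j with
    | zero => intro _ i h1 h2; omega
    | succ k ih =>
      intro hk i h1 hik
      rcases eq_or_lt_of_le hik with he | hlt
      · subst he; exact subset_rfl
      · have hsub : Ws k ⊆ Ws (k + 1) := by
          rw [hWrec k (by omega) (by omega)]
          exact fun w hw => hw.1
        exact (ih (by omega) i h1 (by omega)).trans hsub
  have hWsInW : ∀ i, 1 ≤ i → i ≤ p + 1 → ∀ w ∈ Ws i, w ∈ W := by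
    intro i h1 h2 w hw
    have := hchain (p + 1) le_rfl i h1 h2 hw
    rwa [hWtop] at this
  -- Claim 1
  have claim1 : ∀ i, 1 ≤ i → i ≤ p → Ws i = {w ∈ Ws (i + 1) | ⇑w '' B i = B i} := by
    intro i h1 hip
    ext w
    rw [hWrec i h1 hip]
    simp only [Set.mem_setOf_eq]
    constructor
    · rintro ⟨hw1, hw2⟩
      refine ⟨hw1, ?_⟩
      have hwW : w ∈ W := hWsInW (i + 1) (by omega) (by omega) w hw1
      have hΦi : ∀ α, α ∈ Φh i ↔ α ∘ₗ (w : t →ₗ[ℂ] t) ∈ Φh i := hUtoΦ w hwW i hw2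
      have hΦi1 : ∀ α, α ∈ Φh (i + 1) ↔ α ∘ₗ (w : t →ₗ[ℂ] t) ∈ Φh (i + 1) := by
        rcases eq_or_lt_of_le hip with he | hlt
        · rw [he]
          intro α
          rw [htop]
          exact hΦiff w hwW α
        · have hrec := hWrec (i + 1) (by omega) (by omega)
          rw [hrec] at hw1
          exact hUtoΦ w hwW (i + 1) hw1.2
      have hD : ∀ α, α ∈ Φh (i + 1) \ Φh i ↔
          α ∘ₗ (w : t →ₗ[ℂ] t) ∈ Φh (i + 1) \ Φh i := by
        intro α
        rw [Set.mem_diff, Set.mem_diff, hΦi1, hΦi]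
      rw [hB i hip, Set.image_diff w.injective, hw2]
      congr 1
      ext x
      simp only [Set.mem_image, Set.mem_iUnion, Set.mem_setOf_eq]
      constructor
      · rintro ⟨y, ⟨α, hα, hαy⟩, rfl⟩
        refine ⟨α ∘ₗ ((w.symm : t ≃ₗ[ℂ] t) : t →ₗ[ℂ] t), ?_, ?_⟩
        · have hβ : (α ∘ₗ ((w.symm : t ≃ₗ[ℂ] t) : t →ₗ[ℂ] t)) ∘ₗ (w : t →ₗ[ℂ] t) = α := by
            ext v; simp
          exact (hD _).2 (by rw [hβ]; exact hα)
        · simpa using hαy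
      · rintro ⟨α, hα, hαx⟩
        refine ⟨w.symm x, ⟨α ∘ₗ (w : t →ₗ[ℂ] t), (hD α).1 hα, by simpa using hαx⟩, by simp⟩
    · rintro ⟨hw1, hw2⟩
      refine ⟨hw1, ?_⟩
      have hfwd : ∀ x ∈ U i, w x ∈ U i := hBtoU i hip w hw2
      have hv' : ⇑w.symm '' B i = B i := by
        conv_lhs => rw [← hw2]
        rw [← Set.image_comp]
        ext y
        simp
      have hbwd : ∀ x ∈ U i, w.symm x ∈ U i := hBtoU i hip w.symm hv'
      ext x
      constructor
      · rintro ⟨y, hy, rfl⟩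
        exact hfwd y hy
      · intro hx
        exact ⟨w.symm x, hbwd x hx, by simp⟩
  -- Claim 2
  have claim2 : {w : t ≃ₗ[ℂ] t | w ∈ W ∧ ∀ i, 1 ≤ i → i ≤ p → w (A i) ∈ B i} = Ws 1 := by
    ext w
    simp only [Set.mem_setOf_eq]
    constructor
    · rintro ⟨hwW, hwA⟩
      have key2 : ∀ n i, i + n = p + 1 → 1 ≤ i → w ∈ Ws i := by
        intro n
        induction n with
        | zero =>
          intro i hi _
          have hipe : i = p + 1 := by omega
          rw [hipe, hWtop]
          exact hwW
        | succ k ih =>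
          intro i hi h1
          have hip : i ≤ p := by omega
          have hw1 : w ∈ Ws (i + 1) := ih (i + 1) (by omega) (by omega)
          rw [hWrec i h1 hip]
          refine ⟨hw1, ?_⟩
          have hyp : ∀ j, i ≤ j → j ≤ p → w (A j) ∈ U j := by
            intro j hij hjp
            have hBU : B j ⊆ U j := by rw [hB j hjp]; exact Set.diff_subset
            exact hBU (hwA j (by omega) hjp)
          exact hΦtoU w i (hstabΦ w hwW i hyp)
      exact key2 p 1 (by omega) le_rfl
    · intro hw
      have hwW : w ∈ W := hWsInW 1 le_rfl (by omega) w hw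
      refine ⟨hwW, fun i h1 hip => ?_⟩
      have hwi : w ∈ Ws i := hchain i (by omega) 1 le_rfl h1 hw
      rw [claim1 i h1 hip] at hwi
      rw [← hwi.2]
      exact ⟨A i, hAB i hip, rfl⟩
  refine ⟨claim1, claim2, ?_⟩
  ext x
  simp only [Set.mem_inter_iff, Set.mem_setOf_eq]
  constructor
  · rintro ⟨⟨w, hwW, rfl⟩, hxB⟩
    refine ⟨w, ?_, rfl⟩
    rw [← claim2]
    refine ⟨hwW, fun j h1 hjp => ?_⟩
    have hj : j - 1 < p := by omega
    have hxj := hxB ⟨j - 1, hj⟩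
    simp only at hxj
    have hjj : j - 1 + 1 = j := by omega
    rwa [hjj] at hxj
  · rintro ⟨w, hw, rfl⟩
    rw [← claim2] at hw
    obtain ⟨hwW, hwA⟩ := hw
    refine ⟨⟨w, hwW, rfl⟩, fun i => ?_⟩
    exact hwA (i.1 + 1) (Nat.succ_le_succ (Nat.zero_le _)) (Nat.succ_le_of_lt i.2)
end

section
/- In the setting of a surjective partition map φ : Fin n → J with parts I_j := φ⁻¹(j) and K_i := {j ∈ J : |I_j| = i}, let Stab ≤ Perm(Fin n) be the subgroup of permutations σ such that for every j ∈ J there is j′ ∈ J with σ(I_j) = I_{j′}. The subgroup N := {σ ∈ Perm(Fin n) : σ(I_j) = I_j for all j ∈ J}, which is isomorphic to ∏_{j ∈ J} Perm(I_j), is a normal subgroup of Stab, and the quotient Stab / N is isomorphic to ∏_{i ≥ 1} Perm(K_i). -/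
/-!
Since `φ` is onto, a permutation `σ` maps parts onto parts exactly when it descends along `φ`
to a permutation `τ` of `J` (`φ ∘ σ = τ ∘ φ`), and `τ` is then unique. So `σ ↦ τ` is a
homomorphism `Stab → Perm J` with kernel `N`; its image consists of the `τ` preserving part
sizes, because parts of equal size can be matched by arbitrary bijections. Finally, the
permutations preserving a map `f` (here `φ` itself, or the size map `J → {i // 1 ≤ i}`) form
a group isomorphic to the product of the permutation groups of the fibres of `f`.
-/

open Equiv Function

namespace Equiv.Perm

variable {α J : Type*} {φ : α → J}

theorem semiconj_of_image_fiber_eq {σ : α → α} {g : J → J}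
    (h : ∀ j, σ '' (φ ⁻¹' {j}) = φ ⁻¹' {g j}) : Semiconj φ σ g := fun a => by
  simpa [h] using Set.mem_image_of_mem σ (Set.mem_preimage.2 rfl : a ∈ φ ⁻¹' {φ a})

theorem image_fiber_eq_of_semiconj {σ : Perm α} {τ : Perm J} (h : Semiconj φ σ τ) (j : J) :
    σ '' (φ ⁻¹' {j}) = φ ⁻¹' {τ j} := by
  ext b
  rw [σ.image_eq_preimage_symm]
  simp only [Set.mem_preimage, Set.mem_singleton_iff]
  rw [← τ.injective.eq_iff, ← h, apply_symm_apply]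

theorem image_fiber_eq_iff_semiconj {σ : Perm α} {τ : Perm J} :
    (∀ j, σ '' (φ ⁻¹' {j}) = φ ⁻¹' {τ j}) ↔ Semiconj φ σ τ :=
  ⟨semiconj_of_image_fiber_eq, image_fiber_eq_of_semiconj⟩

theorem exists_semiconj_iff_forall_image_fiber (hφ : Surjective φ) (σ : Perm α) :
    (∃ τ : Perm J, Semiconj φ σ τ) ↔ ∀ j, ∃ j', σ '' (φ ⁻¹' {j}) = φ ⁻¹' {j'} := by
  refine ⟨fun ⟨τ, h⟩ j => ⟨τ j, image_fiber_eq_of_semiconj h j⟩, fun h => ?_⟩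
  choose g hg using h
  have hinj : Injective g := by
    intro j j' hgj
    obtain ⟨a, rfl⟩ := hφ j
    have hfib : φ ⁻¹' {φ a} = φ ⁻¹' {j'} :=
      Set.image_injective.2 σ.injective (by rw [hg, hg, hgj])
    exact (hfib ▸ (rfl : a ∈ φ ⁻¹' {φ a}) : a ∈ φ ⁻¹' {j'})
  have hsurj : Surjective g := by
    intro j
    obtain ⟨a, rfl⟩ := hφ j
    exact ⟨φ (σ.symm a), by simpa using (semiconj_of_image_fiber_eq hg (σ.symm a)).symm⟩
  exact ⟨ofBijective g ⟨hinj, hsurj⟩, semiconj_of_image_fiber_eq hg⟩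

theorem eq_of_semiconj (hφ : Surjective φ) {σ : α → α} {τ₁ τ₂ : Perm J}
    (h₁ : Semiconj φ σ τ₁) (h₂ : Semiconj φ σ τ₂) : τ₁ = τ₂ :=
  Equiv.ext <| hφ.forall.2 fun a => (h₁ a).symm.trans (h₂ a)

theorem card_fiber_apply_of_semiconj {σ : Perm α} {τ : Perm J} (h : Semiconj φ σ τ) (j : J) :
    Nat.card (φ ⁻¹' {τ j}) = Nat.card (φ ⁻¹' {j}) := by
  rw [← image_fiber_eq_of_semiconj h, Nat.card_image_of_injective σ.injective]

theorem exists_semiconj_of_card_fiber [Finite α] (τ : Perm J)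
    (h : ∀ j, Nat.card (φ ⁻¹' {τ j}) = Nat.card (φ ⁻¹' {j})) :
    ∃ σ : Perm α, Semiconj φ σ τ := by
  have e : ∀ j, Nonempty ({a // τ (φ a) = j} ≃ {a // φ a = j}) := fun j => by
    rw [← Finite.card_eq,
      Nat.card_congr (subtypeEquivRight fun a => τ.eq_symm_apply.symm)]
    have hj := h (τ.symm j)
    rw [apply_symm_apply] at hj
    exact hj.symm
  exact ⟨ofFiberEquiv fun j => (e j).some, ofFiberEquiv_map _⟩

variable (φ) in
def descendSubgroup : Subgroup (Perm α) where
  carrier := {σ | ∃ τ : Perm J, Semiconj φ σ τ}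
  mul_mem' := fun ⟨τ, h⟩ ⟨τ', h'⟩ => ⟨τ * τ', h.comp_right h'⟩
  one_mem' := ⟨1, fun _ => rfl⟩
  inv_mem' := fun {σ} ⟨τ, h⟩ => ⟨τ⁻¹, h.inverses_right σ.right_inv τ.left_inv⟩

noncomputable def descendHom (hφ : Surjective φ) : descendSubgroup φ →* Perm J where
  toFun σ := σ.2.choose
  map_one' := eq_of_semiconj hφ (1 : descendSubgroup φ).2.choose_spec fun _ => rfl
  map_mul' σ σ' :=
    eq_of_semiconj hφ (σ * σ').2.choose_spec (σ.2.choose_spec.comp_right σ'.2.choose_spec)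

theorem descendHom_eq_iff (hφ : Surjective φ) {σ : descendSubgroup φ} {τ : Perm J} :
    descendHom hφ σ = τ ↔ Semiconj φ σ τ :=
  ⟨fun h => h ▸ σ.2.choose_spec, eq_of_semiconj hφ σ.2.choose_spec⟩

variable (φ) in
def fiberwiseSubgroup : Subgroup (Perm α) where
  carrier := {σ | ∀ a, φ (σ a) = φ a}
  mul_mem' h h' a := (h _).trans (h' a)
  one_mem' _ := rfl
  inv_mem' {σ} h a := by simpa using (h (σ⁻¹ a)).symm

variable (φ) in
noncomputable def fiberwiseSubgroupEquivPi :
    fiberwiseSubgroup φ ≃* ∀ j, Perm {a // φ a = j} where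
  toFun σ j := (σ : Perm α).subtypePerm fun a => by rw [σ.2 a]
  invFun π := ⟨ofFiberEquiv π, ofFiberEquiv_map π⟩
  left_inv _ := rfl
  right_inv π := by
    ext j ⟨a, rfl⟩
    rfl
  map_mul' _ _ := rfl

end Equiv.Perm

theorem stmt_8_general {n : ℕ} {J : Type*}
    (φ : Fin n → J) (hφ : Function.Surjective φ)
    (Stab : Subgroup (Equiv.Perm (Fin n)))
    (hStab : (Stab : Set (Equiv.Perm (Fin n)))
        = {σ : Equiv.Perm (Fin n) |
            ∀ j : J, ∃ j' : J, ⇑σ '' (φ ⁻¹' {j}) = φ ⁻¹' {j'}})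
    (N : Subgroup Stab)
    (hN : (N : Set Stab)
        = {σ : Stab | ∀ j : J,
            ⇑(σ : Equiv.Perm (Fin n)) '' (φ ⁻¹' {j}) = φ ⁻¹' {j}}) :
    Nonempty (N ≃* ∀ j : J, Equiv.Perm {a : Fin n // φ a = j}) ∧
      ∃ h : N.Normal,
        Nonempty (letI : N.Normal := h
          ((Stab ⧸ N) ≃* ∀ i : {i : ℕ // 1 ≤ i},
            Equiv.Perm {j : J // Nat.card (φ ⁻¹' {j}) = (i : ℕ)})) := by
  have mem_Stab (σ) : σ ∈ Stab ↔ ∃ τ : Perm J, Semiconj φ σ τ := by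
    rw [← SetLike.mem_coe, hStab]
    exact (Perm.exists_semiconj_iff_forall_image_fiber hφ σ).symm
  have mem_N (σ : Stab) : σ ∈ N ↔ Semiconj φ σ (1 : Perm J) := by
    rw [← SetLike.mem_coe, hN]
    exact Perm.image_fiber_eq_iff_semiconj (τ := 1)
  have hN_map : N.map Stab.subtype = Perm.fiberwiseSubgroup φ := by
    ext σ
    refine ⟨fun ⟨σ', hσ', hσ⟩ => hσ ▸ (mem_N σ').1 hσ', fun hσ => ?_⟩
    exact ⟨⟨σ, (mem_Stab σ).2 ⟨1, hσ⟩⟩, (mem_N _).2 hσ, rfl⟩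
  let Φ : Stab →* Perm J :=
    (Perm.descendHom hφ).comp (Subgroup.inclusion fun σ hσ => (mem_Stab σ).1 hσ)
  have hΦ (σ : Stab) (τ : Perm J) : Φ σ = τ ↔ Semiconj φ σ τ := Perm.descendHom_eq_iff hφ
  let size (j : J) : {i : ℕ // 1 ≤ i} :=
    ⟨Nat.card (φ ⁻¹' {j}), Nat.card_pos_iff.2
      ⟨((Set.singleton_nonempty j).preimage hφ).to_subtype, inferInstance⟩⟩
  let Ψ : Stab →* Perm.fiberwiseSubgroup size := Φ.codRestrict _ fun σ j =>
    Subtype.ext (Perm.card_fiber_apply_of_semiconj ((hΦ σ _).1 rfl) j)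
  have hΨ_ker : Ψ.ker = N := by
    ext σ
    rw [MonoidHom.mem_ker, Subtype.ext_iff, mem_N]
    exact hΦ σ 1
  have hΨ_surj : Surjective Ψ := by
    rintro ⟨τ, hτ⟩
    obtain ⟨σ, hσ⟩ := Perm.exists_semiconj_of_card_fiber τ fun j => congrArg Subtype.val (hτ j)
    exact ⟨⟨σ, (mem_Stab σ).2 ⟨τ, hσ⟩⟩, Subtype.ext ((hΦ _ τ).2 hσ)⟩
  refine ⟨⟨(N.equivMapOfInjective _ Stab.subtype_injective).trans
    ((MulEquiv.subgroupCongr hN_map).trans (Perm.fiberwiseSubgroupEquivPi φ))⟩, ?_⟩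
  subst hΨ_ker
  exact ⟨Ψ.normal_ker, ⟨(QuotientGroup.quotientKerEquivOfSurjective Ψ hΨ_surj).trans <|
    (Perm.fiberwiseSubgroupEquivPi size).trans <| MulEquiv.piCongrRight fun i =>
      (subtypeEquivRight fun j => Subtype.ext_iff).permCongrHom⟩⟩

/-- Let `φ : Fin n → J` be a surjective partition map with parts `I_j = φ⁻¹ {j}` and
`K_i = {j ∈ J : |I_j| = i}`, and let `Stab ≤ Perm (Fin n)` be the subgroup of
permutations mapping every part onto a part.  The subgroup
`N = {σ : σ (I_j) = I_j for all j}`, which is isomorphic to `∏_{j ∈ J} Perm (I_j)`,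
is normal in `Stab`, and the quotient `Stab / N` is isomorphic to
`∏_{i ≥ 1} Perm (K_i)`. -/
theorem stmt_8 {n : ℕ} (hn : 1 ≤ n) {J : Type*} [Fintype J] [DecidableEq J]
    (φ : Fin n → J) (hφ : Function.Surjective φ)
    (Stab : Subgroup (Equiv.Perm (Fin n)))
    (hStab : (Stab : Set (Equiv.Perm (Fin n)))
        = {σ : Equiv.Perm (Fin n) |
            ∀ j : J, ∃ j' : J, ⇑σ '' (φ ⁻¹' {j}) = φ ⁻¹' {j'}})
    (N : Subgroup Stab)
    (hN : (N : Set Stab)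
        = {σ : Stab | ∀ j : J,
            ⇑(σ : Equiv.Perm (Fin n)) '' (φ ⁻¹' {j}) = φ ⁻¹' {j}}) :
    Nonempty (N ≃* ∀ j : J, Equiv.Perm {a : Fin n // φ a = j}) ∧
      ∃ h : N.Normal,
        Nonempty (letI : N.Normal := h
          ((Stab ⧸ N) ≃* ∀ i : {i : ℕ // 1 ≤ i},
            Equiv.Perm {j : J // Nat.card (φ ⁻¹' {j}) = (i : ℕ)})) :=
  stmt_8_general φ hφ Stab hStab N hN
end
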